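/- arXiv:2205.08762 — 2 statements merged into one kernel-verified Lean document; each statement's English description precedes it below -/
import Mathlib

section
/- Let (C, δ, F) be a DFA over the binary alphabet and let ♯ : C × C → ℕ be any function with ♯(c₁,c₂) ≥ 1 for all c₁, c₂, and such that whenever ♯(c₁,c₂) > 1, for every word w with 0 < |w| < ♯(c₁,c₂) we have δ*(c₁,w) ∈ F ↔ c₁ ∈ F and δ*(c₂,w) ∈ F ↔ c₂ ∈ F. If R is a bisimulation with leaps for ♯ (i.e., c₁ R c₂ implies c₁ ∈ F ↔ c₂ ∈ F, and δ*(c₁,w) R δ*(c₂,w) for every word w of length exactly ♯(c₁,c₂)), then c₁ R c₂ implies L(c₁) = L(c₂). -/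
def deltaStar {C : Type*} (δ : C → Bool → C) : C → List Bool → C
  | c, [] => c
  | c, b :: w => deltaStar δ (δ c b) w

def lang {C : Type*} (δ : C → Bool → C) (F : Set C) (c : C) : Set (List Bool) :=
  { w | deltaStar δ c w ∈ F }

def IsBisim {C : Type*} (δ : C → Bool → C) (F : Set C) (R : C → C → Prop) : Prop :=
  ∀ c₁ c₂, R c₁ c₂ → (c₁ ∈ F ↔ c₂ ∈ F) ∧ ∀ b, R (δ c₁ b) (δ c₂ b)

lemma deltaStar_append {C : Type*} (δ : C → Bool → C) (c : C) (u v : List Bool) :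
    deltaStar δ c (u ++ v) = deltaStar δ (deltaStar δ c u) v := by
  induction u generalizing c with
  | nil => rfl
  | cons b u ih => simp [deltaStar, ih]

theorem leap_bisim_sound {C : Type*} (δ : C → Bool → C) (F : Set C)
    (sharp : C → C → ℕ)
    (hsharp : ∀ c₁ c₂, 1 ≤ sharp c₁ c₂)
    (hbuffer : ∀ c₁ c₂, 1 < sharp c₁ c₂ →
      ∀ w : List Bool, 0 < w.length → w.length < sharp c₁ c₂ →
        (deltaStar δ c₁ w ∈ F ↔ c₁ ∈ F) ∧ (deltaStar δ c₂ w ∈ F ↔ c₂ ∈ F))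
    (R : C → C → Prop)
    (hR : ∀ c₁ c₂, R c₁ c₂ → (c₁ ∈ F ↔ c₂ ∈ F) ∧
      ∀ w : List Bool, w.length = sharp c₁ c₂ → R (deltaStar δ c₁ w) (deltaStar δ c₂ w)) :
    ∀ c₁ c₂, R c₁ c₂ → lang δ F c₁ = lang δ F c₂ := by
  have key : ∀ n : ℕ, ∀ w : List Bool, w.length ≤ n → ∀ c₁ c₂, R c₁ c₂ →
      (deltaStar δ c₁ w ∈ F ↔ deltaStar δ c₂ w ∈ F) := by
    intro n
    induction n with
    | zero =>
      intro w hw c₁ c₂ hrel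
      have : w = [] := List.eq_nil_of_length_eq_zero (Nat.le_zero.mp hw)
      subst this
      exact (hR c₁ c₂ hrel).1
    | succ n ih =>
      intro w hw c₁ c₂ hrel
      rcases Nat.eq_zero_or_pos w.length with h0 | hpos
      · have : w = [] := List.eq_nil_of_length_eq_zero h0
        subst this
        exact (hR c₁ c₂ hrel).1
      · set k := sharp c₁ c₂ with hk
        rcases lt_or_ge w.length k with hlt | hge
        · -- buffered: k > 1
          have hk1 : 1 < k := lt_of_le_of_lt hpos hlt
          obtain ⟨h1, h2⟩ := hbuffer c₁ c₂ hk1 w hpos hlt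
          rw [h1, h2]
          exact (hR c₁ c₂ hrel).1
        · -- split w = take k ++ drop k
          have hsplit := List.take_append_drop k w
          have hlen : (w.take k).length = k := by
            simp [List.length_take, Nat.min_eq_left hge]
          have hrel' := (hR c₁ c₂ hrel).2 (w.take k) hlen
          have hdroplen : (w.drop k).length ≤ n := by
            have h1 : (w.drop k).length = w.length - k := by simp
            have h2 : 1 ≤ k := hsharp c₁ c₂
            omega
          have := ih (w.drop k) hdroplen _ _ hrel'
          rw [← hsplit, deltaStar_append, deltaStar_append]
          exact this
  intro c₁ c₂ hrel
  ext w
  exact key w.length w le_rfl c₁ c₂ hrel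
end

section
/- Abstract correctness of the symbolic refinement loop: let (C, δ, F) be a DFA, and let Φ be a family of subsets of C × C ('formulas') interpreted as relations. Suppose a worklist procedure maintains finite sets R, T of formulas with invariants: (i) pairs related by ⋂(R ∪ T) that step, via δ on both sides with the same bit, land in ⋂R; (ii) pairs in ⋂(R ∪ T) agree on membership in F; (iii) every bisimulation contained in language equivalence is contained in ⋂(R ∪ T) whenever it is a bisimulation. If the procedure terminates with T = ∅, then ⋂R is the largest bisimulation on (C, δ, F), i.e., ⋂R = { (c₁,c₂) | L(c₁) = L(c₂) }. -/
def IsBisimSet {C : Type*} (δ : C → Bool → C) (F : Set C) (R : Set (C × C)) : Prop :=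
  ∀ p ∈ R, (p.1 ∈ F ↔ p.2 ∈ F) ∧ ∀ b : Bool, (δ p.1 b, δ p.2 b) ∈ R


lemma bisim_sub_lang {C : Type*} (δ : C → Bool → C) (F : Set C) (B : Set (C × C))
    (hB : IsBisimSet δ F B) : ∀ w : List Bool, ∀ p ∈ B,
    (w ∈ lang δ F p.1 ↔ w ∈ lang δ F p.2) := by
  intro w
  induction w with
  | nil => intro p hp; exact (hB p hp).1
  | cons b w ih =>
    intro p hp
    exact ih (δ p.1 b, δ p.2 b) ((hB p hp).2 b)

theorem symbolic_refinement_correct {C : Type*} (δ : C → Bool → C) (F : Set C)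
    (R T : Set (Set (C × C))) (hRfin : R.Finite) (hTfin : T.Finite)
    (hstep : ∀ p ∈ ⋂₀ (R ∪ T), ∀ b : Bool, (δ p.1 b, δ p.2 b) ∈ ⋂₀ R)
    (hacc : ∀ p ∈ ⋂₀ (R ∪ T), p.1 ∈ F ↔ p.2 ∈ F)
    (hcontain : ∀ B : Set (C × C), IsBisimSet δ F B → B ⊆ ⋂₀ (R ∪ T))
    (hT : T = ∅) :
    ⋂₀ R = { p : C × C | lang δ F p.1 = lang δ F p.2 } := by
  subst hT
  simp only [Set.union_empty] at hstep hacc hcontain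
  have hbisim : IsBisimSet δ F (⋂₀ R) := fun p hp => ⟨hacc p hp, hstep p hp⟩
  apply subset_antisymm
  · intro p hp
    ext w
    exact bisim_sub_lang δ F _ hbisim w p hp
  · apply hcontain
    intro p hp
    refine ⟨?_, fun b => ?_⟩
    · have := Set.ext_iff.mp hp ([] : List Bool); exact this
    · show lang δ F (δ p.1 b) = lang δ F (δ p.2 b)
      ext w
      have := Set.ext_iff.mp hp (b :: w)
      exact this
end
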